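/- For the dendriform operations on sets of planar binary trees, the relation (r + s) ⊢ t = r ⊢ (s ⊢ t) holds for all nonempty finite sets of nontrivial trees r, s, t. -/

import Mathlib

/-- Planar binary rooted trees: either the trivial tree `leaf` (drawn `|`)
or the grafting `node l r = l ∨ r` of two trees. -/
inductive PBT : Type
  | leaf : PBT
  | node : PBT → PBT → PBT
deriving DecidableEq

namespace PBT

/-- Number of internal vertices of a tree. -/
def size : PBT → ℕ
  | leaf => 0
  | node l r => l.size + r.size + 1

/-- The dendriform sum of two trees, a set of trees:
`s + t = (s ⊣ t) ∪ (s ⊢ t)` with `s ⊣ t = sˡ ∨ (sʳ + t)`, `s ⊢ t = (s + tˡ) ∨ tʳ`,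
and the trivial tree acting as neutral element. -/
def addT : PBT → PBT → Set PBT
  | leaf, t => {t}
  | node l r, leaf => {node l r}
  | node l r, node l' r' =>
      (fun x => node l x) '' addT r (node l' r') ∪
      (fun x => node x r') '' addT (node l r) l'
termination_by s t => s.size + t.size
decreasing_by all_goals (simp [size] <;> omega)

/-- The left operation `s ⊣ t := sˡ ∨ (sʳ + t)` on trees (with `s ⊣ | = s`),
valued in sets of trees. -/
def leftT : PBT → PBT → Set PBT
  | leaf, _ => ∅
  | node l r, leaf => {node l r}
  | node l r, node l' r' => (fun x => node l x) '' addT r (node l' r')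

/-- The right operation `s ⊢ t := (s + tˡ) ∨ tʳ` on trees (with `| ⊢ t = t`),
valued in sets of trees. -/
def rightT : PBT → PBT → Set PBT
  | _, leaf => ∅
  | leaf, t => {t}
  | node l r, node l' r' => (fun x => node x r') '' addT (node l r) l'

/-- Elementwise extension of `⊣` to sets of trees. -/
def leftS (S T : Set PBT) : Set PBT := ⋃ s ∈ S, ⋃ t ∈ T, leftT s t

/-- Elementwise extension of `⊢` to sets of trees. -/
def rightS (S T : Set PBT) : Set PBT := ⋃ s ∈ S, ⋃ t ∈ T, rightT s t

/-- Elementwise extension of the sum `+` to sets of trees: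
`S + T = (S ⊣ T) ∪ (S ⊢ T)`. -/
def addS (S T : Set PBT) : Set PBT := ⋃ s ∈ S, ⋃ t ∈ T, addT s t

/-- A nonempty finite set of nontrivial trees. -/
def Good (S : Set PBT) : Prop := S.Nonempty ∧ S.Finite ∧ ∀ t ∈ S, t ≠ leaf

end PBT


namespace PBT

lemma leaf_addT (t : PBT) : addT leaf t = {t} := by rw [addT]

lemma addT_leaf (a : PBT) : addT a leaf = {a} := by
  cases a <;> rw [addT]

lemma addT_node_node (l r l' r' : PBT) :
    addT (node l r) (node l' r') =
      (fun x => node l x) '' addT r (node l' r') ∪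
      (fun x => node x r') '' addT (node l r) l' := by rw [addT]

theorem addT_assoc : ∀ (a b c : PBT),
    (⋃ x ∈ addT a b, addT x c) = ⋃ y ∈ addT b c, addT a y
  | leaf, b, c => by simp [leaf_addT]
  | node a1 a2, leaf, c => by simp [addT_leaf, leaf_addT]
  | node a1 a2, node b1 b2, leaf => by simp [addT_leaf]
  | node a1 a2, node b1 b2, node c1 c2 => by
    have ih1 := addT_assoc a2 (node b1 b2) (node c1 c2)
    have ih2 := addT_assoc (node a1 a2) (node b1 b2) c1
    have comb : ∀ (h : PBT → Set PBT),
        (⋃ x ∈ addT (node a1 a2) (node b1 b2), h x) =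
          (⋃ u ∈ addT a2 (node b1 b2), h (node a1 u)) ∪
          (⋃ v ∈ addT (node a1 a2) b1, h (node v b2)) := by
      intro h
      rw [addT_node_node, Set.biUnion_union, Set.biUnion_image, Set.biUnion_image]
    have combc : ∀ (h : PBT → Set PBT),
        (⋃ y ∈ addT (node b1 b2) (node c1 c2), h y) =
          (⋃ w ∈ addT b2 (node c1 c2), h (node b1 w)) ∪
          (⋃ z ∈ addT (node b1 b2) c1, h (node z c2)) := by
      intro h
      rw [addT_node_node, Set.biUnion_union, Set.biUnion_image, Set.biUnion_image]
    have hL : (⋃ x ∈ addT (node a1 a2) (node b1 b2), addT x (node c1 c2)) =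
        (fun x => node a1 x) '' (⋃ y ∈ addT (node b1 b2) (node c1 c2), addT a2 y) ∪
        (fun x => node x c2) '' (⋃ z ∈ addT (node b1 b2) c1, addT (node a1 a2) z) ∪
        (⋃ v ∈ addT (node a1 a2) b1, (fun x => node v x) '' addT b2 (node c1 c2)) := by
      conv_lhs => rw [comb (fun x => addT x (node c1 c2))]
                  simp only [addT_node_node, Set.iUnion_union_distrib]
      have p1 : (⋃ u ∈ addT a2 (node b1 b2), (fun x => node a1 x) '' addT u (node c1 c2)) =
          (fun x => node a1 x) '' (⋃ y ∈ addT (node b1 b2) (node c1 c2), addT a2 y) := by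
        rw [← Set.image_iUnion₂, ih1]
      have p2 : (⋃ u ∈ addT a2 (node b1 b2), (fun x => node x c2) '' addT (node a1 u) c1) ∪
          (⋃ v ∈ addT (node a1 a2) b1, (fun x => node x c2) '' addT (node v b2) c1) =
          (fun x => node x c2) '' (⋃ z ∈ addT (node b1 b2) c1, addT (node a1 a2) z) := by
        rw [← comb (fun x => (fun x => node x c2) '' addT x c1), ← Set.image_iUnion₂, ih2]
      ext k
      have q1 := Set.ext_iff.mp p1 k
      have q2 := Set.ext_iff.mp p2 k
      simp only [Set.mem_union] at *
      tauto
    have hR : (⋃ y ∈ addT (node b1 b2) (node c1 c2), addT (node a1 a2) y) =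
        (fun x => node a1 x) '' (⋃ y ∈ addT (node b1 b2) (node c1 c2), addT a2 y) ∪
        (fun x => node x c2) '' (⋃ z ∈ addT (node b1 b2) c1, addT (node a1 a2) z) ∪
        (⋃ v ∈ addT (node a1 a2) b1, (fun x => node v x) '' addT b2 (node c1 c2)) := by
      conv_lhs => rw [combc (fun y => addT (node a1 a2) y)]
                  simp only [addT_node_node, Set.iUnion_union_distrib]
      have r1 : (⋃ w ∈ addT b2 (node c1 c2), (fun x => node a1 x) '' addT a2 (node b1 w)) ∪
          (⋃ z ∈ addT (node b1 b2) c1, (fun x => node a1 x) '' addT a2 (node z c2)) =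
          (fun x => node a1 x) '' (⋃ y ∈ addT (node b1 b2) (node c1 c2), addT a2 y) := by
        rw [← Set.image_iUnion₂, ← Set.image_iUnion₂, ← Set.image_union,
          ← combc (fun y => addT a2 y)]
      have r2 : (⋃ z ∈ addT (node b1 b2) c1, (fun x => node x c2) '' addT (node a1 a2) z) =
          (fun x => node x c2) '' (⋃ z ∈ addT (node b1 b2) c1, addT (node a1 a2) z) := by
        rw [← Set.image_iUnion₂]
      have r3 : (⋃ w ∈ addT b2 (node c1 c2), (fun x => node x w) '' addT (node a1 a2) b1) =
          (⋃ v ∈ addT (node a1 a2) b1, (fun x => node v x) '' addT b2 (node c1 c2)) := by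
        ext k
        simp only [Set.mem_iUnion, Set.mem_image]
        constructor
        · rintro ⟨w, hw, x, hx, rfl⟩; exact ⟨x, hx, w, hw, rfl⟩
        · rintro ⟨v, hv, x, hx, rfl⟩; exact ⟨x, hx, v, hv, rfl⟩
      ext k
      have q1 := Set.ext_iff.mp r1 k
      have q2 := Set.ext_iff.mp r2 k
      have q3 := Set.ext_iff.mp r3 k
      simp only [Set.mem_union] at *
      tauto
    rw [hL, hR]
termination_by a b c => a.size + b.size + c.size
decreasing_by all_goals (simp [size] <;> omega)

lemma rightT_leaf (x : PBT) : rightT x leaf = ∅ := by cases x <;> rw [rightT]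

lemma rightT_node_node (l r l' r' : PBT) :
    rightT (node l r) (node l' r') = (fun x => node x r') '' addT (node l r) l' := by
  rw [rightT]

lemma mem_addT_ne_leaf {a b x : PBT} (ha : a ≠ leaf) (hx : x ∈ addT a b) : x ≠ leaf := by
  cases a with
  | leaf => exact absurd rfl ha
  | node a1 a2 =>
    cases b with
    | leaf =>
      rw [addT_leaf] at hx
      simp only [Set.mem_singleton_iff] at hx
      subst hx; simp
    | node b1 b2 =>
      rw [addT_node_node] at hx
      rcases hx with ⟨y, -, rfl⟩ | ⟨y, -, rfl⟩ <;> simp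

lemma rightT_addT (a b c : PBT) (ha : a ≠ leaf) (hb : b ≠ leaf) :
    (⋃ x ∈ addT a b, rightT x c) = ⋃ y ∈ rightT b c, rightT a y := by
  obtain ⟨a1, a2, rfl⟩ : ∃ a1 a2, a = node a1 a2 := by
    cases a with | leaf => exact absurd rfl ha | node a1 a2 => exact ⟨a1, a2, rfl⟩
  obtain ⟨b1, b2, rfl⟩ : ∃ b1 b2, b = node b1 b2 := by
    cases b with | leaf => exact absurd rfl hb | node b1 b2 => exact ⟨b1, b2, rfl⟩
  cases c with
  | leaf => simp [rightT_leaf]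
  | node c1 c2 =>
    have step : ∀ x ∈ addT (node a1 a2) (node b1 b2),
        rightT x (node c1 c2) = (fun t => node t c2) '' addT x c1 := by
      intro x hx
      cases x with
      | leaf => exact absurd rfl (mem_addT_ne_leaf (by simp) hx)
      | node x1 x2 => rw [rightT_node_node]
    calc (⋃ x ∈ addT (node a1 a2) (node b1 b2), rightT x (node c1 c2))
        = ⋃ x ∈ addT (node a1 a2) (node b1 b2), (fun t => node t c2) '' addT x c1 :=
          Set.iUnion₂_congr step
      _ = (fun t => node t c2) '' ⋃ x ∈ addT (node a1 a2) (node b1 b2), addT x c1 :=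
          (Set.image_iUnion₂ _ _).symm
      _ = (fun t => node t c2) '' ⋃ z ∈ addT (node b1 b2) c1, addT (node a1 a2) z := by
          rw [addT_assoc]
      _ = ⋃ z ∈ addT (node b1 b2) c1, (fun t => node t c2) '' addT (node a1 a2) z :=
          Set.image_iUnion₂ _ _
      _ = ⋃ z ∈ addT (node b1 b2) c1, rightT (node a1 a2) (node z c2) := by
          exact Set.iUnion₂_congr fun z _ => by rw [rightT_node_node]
      _ = ⋃ y ∈ rightT (node b1 b2) (node c1 c2), rightT (node a1 a2) y := by
          rw [rightT_node_node, Set.biUnion_image]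

end PBT


open PBT in
/-- For the dendriform operations on (nonempty finite) sets of nontrivial planar
binary trees, `(r + s) ⊢ t = r ⊢ (s ⊢ t)`. -/
theorem right_add_eq_right_right (r s t : Set PBT)
    (hr : PBT.Good r) (hs : PBT.Good s) (ht : PBT.Good t) :
    rightS (addS r s) t = rightS r (rightS s t) := by
  ext k
  simp only [rightS, addS, Set.mem_iUnion]
  constructor
  · rintro ⟨x, ⟨a, ha, b, hb, hxab⟩, c, hc, hk⟩
    have key := Set.ext_iff.mp (rightT_addT a b c (hr.2.2 a ha) (hs.2.2 b hb)) k
    have hmem : k ∈ ⋃ x ∈ addT a b, rightT x c := Set.mem_biUnion hxab hk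
    obtain ⟨y, hy, hk'⟩ := Set.mem_iUnion₂.mp (key.mp hmem)
    exact ⟨a, ha, y, ⟨b, hb, c, hc, hy⟩, hk'⟩
  · rintro ⟨a, ha, y, ⟨b, hb, c, hc, hy⟩, hk⟩
    have key := Set.ext_iff.mp (rightT_addT a b c (hr.2.2 a ha) (hs.2.2 b hb)) k
    have hmem : k ∈ ⋃ y ∈ rightT b c, rightT a y := Set.mem_biUnion hy hk
    obtain ⟨x, hx, hk'⟩ := Set.mem_iUnion₂.mp (key.mpr hmem)
    exact ⟨x, ⟨a, ha, b, hb, hx⟩, c, hc, hk'⟩
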